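/- If a group G acts discontinuously on a Hausdorff space X, then the quotient map p : X → X/G has the path lifting property: for every path ā : [0,1] → X/G and every x₀ ∈ X with p(x₀) = ā(0), there is a path a : [0,1] → X with p∘a = ā and a(0) = x₀. -/
import Mathlib
set_option linter.unusedSectionVars false
set_option maxHeartbeats 1000000
set_option linter.unusedSectionVars false

open Pointwise

namespace PathLiftAux

open MulAction Set

variable {G : Type*} {X : Type*} [Group G] [TopologicalSpace X] [MulAction G X]
  [ContinuousConstSMul G X]

variable (G) in
/-- The orbit quotient map. -/
abbrev qm (x : X) : Quotient (orbitRel G X) := Quotient.mk (orbitRel G X) x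

theorem qm_eq_iff {x y : X} : qm G x = qm G y ↔ ∃ g : G, g • y = x := by
  rw [Quotient.eq]; exact (orbitRel_apply).trans mem_orbit_iff

theorem qm_surjective : Function.Surjective (qm G (X := X)) := Quotient.mk_surjective

theorem isOpenMap_qm : IsOpenMap (qm G (X := X)) :=
  MulAction.isOpenQuotientMap_quotientMk.isOpenMap

theorem continuous_qm : Continuous (qm G (X := X)) := continuous_quot_mk

theorem preimage_image_qm (V : Set X) : qm G ⁻¹' (qm G '' V) = ⋃ g : G, g • V :=
  MulAction.quotient_preimage_image_eq_union_mul V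

theorem qm_smul (g : G) (x : X) : qm G (g • x) = qm G x :=
  qm_eq_iff.2 ⟨g, rfl⟩

variable (G X) in
/-- Discontinuity hypothesis. -/
def Disc : Prop :=
  ∀ x : X, ∃ V ∈ nhds x, ∀ g : G, g ∉ stabilizer G x → V ∩ g • V = ∅

/-- Invariant small neighbourhoods. -/
theorem exists_invariant_nhd (hdisc : Disc G X) {x : X}
    (hfinx : (stabilizer G x : Set G).Finite) {U : Set X} (hU : IsOpen U) (hxU : x ∈ U) :
    ∃ V : Set X, IsOpen V ∧ x ∈ V ∧ V ⊆ U ∧ (∀ h ∈ stabilizer G x, h • V = V) ∧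
      (∀ g : G, g ∉ stabilizer G x → V ∩ g • V = ∅) := by
  obtain ⟨V₀, hV₀n, hV₀⟩ := hdisc x
  haveI : Finite ↥(stabilizer G x) := hfinx.to_subtype
  set W : Set X := interior V₀ ∩ U with hW
  have hWo : IsOpen W := isOpen_interior.inter hU
  have hxW : x ∈ W := ⟨mem_interior_iff_mem_nhds.2 hV₀n, hxU⟩
  refine ⟨⋂ h : ↥(stabilizer G x), (h : G) • W, ?_, ?_, ?_, ?_, ?_⟩
  · exact isOpen_iInter_of_finite fun h => hWo.smul _
  · exact mem_iInter.2 fun h => ⟨x, hxW, h.2⟩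
  · intro v hv
    have h1 := mem_iInter.1 hv ⟨1, one_mem _⟩
    rw [one_smul] at h1
    exact h1.2
  · -- invariance
    have key : ∀ h ∈ stabilizer G x,
        h • (⋂ k : ↥(stabilizer G x), (k : G) • W) ⊆ ⋂ k : ↥(stabilizer G x), (k : G) • W := by
      intro h hh v hv
      obtain ⟨w, hw, rfl⟩ := hv
      refine mem_iInter.2 fun k => ?_
      have hw' : w ∈ ((h⁻¹ * (k : G)) • W) := mem_iInter.1 hw ⟨h⁻¹ * k, mul_mem (inv_mem hh) k.2⟩
      have : h • ((h⁻¹ * (k : G)) • W) = (k : G) • W := by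
        rw [smul_smul, mul_inv_cancel_left]
      rw [← this]
      exact smul_mem_smul_set hw'
    intro h hh
    refine subset_antisymm (key h hh) ?_
    intro v hv
    have : h⁻¹ • v ∈ ⋂ k : ↥(stabilizer G x), (k : G) • W :=
      key h⁻¹ (inv_mem hh) (smul_mem_smul_set hv)
    exact ⟨h⁻¹ • v, this, by simp⟩
  · intro g hg
    have hsub : (⋂ h : ↥(stabilizer G x), (h : G) • W) ⊆ V₀ := by
      intro v hv
      have := mem_iInter.1 hv ⟨1, one_mem _⟩
      simp only [one_smul] at this
      exact interior_subset this.1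
    have : (⋂ h : ↥(stabilizer G x), (h : G) • W) ∩
        g • ⋂ h : ↥(stabilizer G x), (h : G) • W ⊆ V₀ ∩ g • V₀ :=
      inter_subset_inter hsub (smul_set_mono hsub)
    rw [hV₀ g hg] at this
    exact eq_empty_of_subset_empty this

/-- Translates of an invariant set are equal or disjoint. -/
theorem smul_eq_of_inter_nonempty {x : X} {V : Set X}
    (hinv : ∀ h ∈ stabilizer G x, h • V = V)
    (hdisj : ∀ g : G, g ∉ stabilizer G x → V ∩ g • V = ∅)
    {g g' : G} (h : (g • V ∩ g' • V).Nonempty) : g • V = g' • V := by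
  obtain ⟨v, ⟨w, hw, rfl⟩, ⟨w', hw', hww'⟩⟩ := h
  have hmem : g⁻¹ * g' ∈ stabilizer G x := by
    by_contra hc
    have : w ∈ V ∩ (g⁻¹ * g') • V := by
      refine ⟨hw, w', hw', ?_⟩
      show (g⁻¹ * g') • w' = w
      rw [mul_smul]
      exact inv_smul_eq_iff.2 hww'
    rw [hdisj _ hc] at this
    exact this
  calc g • V = g • ((g⁻¹ * g') • V) := by rw [hinv _ hmem]
    _ = g' • V := by rw [smul_smul, mul_inv_cancel_left]



open MulAction Set

variable {G : Type*} {X : Type*} [Group G] [TopologicalSpace X] [MulAction G X]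
  [ContinuousConstSMul G X]

theorem inter_nonempty_mem_stab {x : X} {V : Set X}
    (hdisj : ∀ g : G, g ∉ stabilizer G x → V ∩ g • V = ∅)
    {g g' : G} (h : (g • V ∩ g' • V).Nonempty) : g⁻¹ * g' ∈ stabilizer G x := by
  obtain ⟨v, ⟨w, hw, rfl⟩, ⟨w', hw', hww'⟩⟩ := h
  by_contra hc
  have : w ∈ V ∩ (g⁻¹ * g') • V := by
    refine ⟨hw, w', hw', ?_⟩
    show (g⁻¹ * g') • w' = w
    rw [mul_smul]
    exact inv_smul_eq_iff.2 hww'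
  rw [hdisj _ hc] at this
  exact this

variable (G) in
/-- `f` lifts `cbar` through the orbit map on the set `s`. -/
def IsLiftOn (cbar : ℝ → Quotient (orbitRel G X)) (f : ℝ → X) (s : Set ℝ) : Prop :=
  ContinuousOn f s ∧ ∀ t ∈ s, qm G (f t) = cbar t

variable (G X) in
/-- The path lifting property for the orbit map of `G` on `X`. -/
def HasPLP : Prop :=
  ∀ cbar : ℝ → Quotient (orbitRel G X), Continuous cbar → ∀ (a b : ℝ) (x₀ : X),
    qm G x₀ = cbar a →
      ∃ f : ℝ → X, IsLiftOn G cbar f (Icc a b) ∧ f a = x₀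

theorem glue_Icc {Y : Type*} [TopologicalSpace Y] {u v : ℝ → Y} {a b c : ℝ}
    (hab : a ≤ b) (hbc : b ≤ c) (hu : ContinuousOn u (Icc a b)) (hv : ContinuousOn v (Icc b c))
    (h : u b = v b) :
    ContinuousOn (fun t => if t ≤ b then u t else v t) (Icc a c) := by
  classical
  have heq : (fun t => if t ≤ b then u t else v t) = (Iic b).piecewise u v := by
    ext t; by_cases ht : t ≤ b <;> simp [Set.piecewise, ht]
  rw [heq]
  apply ContinuousOn.piecewise
  · intro t ht
    rw [frontier_Iic] at ht
    rw [ht.2]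
    exact h
  · rw [closure_Iic]
    have : Icc a c ∩ Iic b = Icc a b := by
      ext t; simp only [mem_inter_iff, mem_Icc, mem_Iic]
      constructor
      · rintro ⟨⟨h1, _⟩, h3⟩; exact ⟨h1, h3⟩
      · rintro ⟨h1, h2⟩; exact ⟨⟨h1, h2.trans hbc⟩, h2⟩
    rw [this]; exact hu
  · rw [compl_Iic, closure_Ioi]
    have : Icc a c ∩ Ici b = Icc b c := by
      ext t; simp only [mem_inter_iff, mem_Icc, mem_Ici]
      constructor
      · rintro ⟨⟨_, h2⟩, h3⟩; exact ⟨h3, h2⟩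
      · rintro ⟨h1, h2⟩; exact ⟨⟨hab.trans h1, h2⟩, h1⟩
    rw [this]; exact hv

/-- Extension of a lift from `[α,S)` to `[α,S]`. -/
theorem extend_closure (hfin : ∀ x : X, (stabilizer G x : Set G).Finite) (hdisc : Disc G X)
    {cbar : ℝ → Quotient (orbitRel G X)} (hc : Continuous cbar) {α S : ℝ} (hαS : α < S)
    {f : ℝ → X} (hf : IsLiftOn G cbar f (Ico α S)) :
    ∃ f' : ℝ → X, IsLiftOn G cbar f' (Icc α S) ∧ EqOn f f' (Ico α S) := by
  classical
  set x : X := (cbar S).out with hxdef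
  have hpx : qm G x = cbar S := Quotient.out_eq _
  obtain ⟨V, hVo, hxV, -, hVinv, hVdisj⟩ :=
    exists_invariant_nhd hdisc (hfin x) isOpen_univ (mem_univ x)
  -- the tail of the path is in `p(V)`
  have hO : cbar ⁻¹' (qm G '' V) ∈ nhds S :=
    hc.continuousAt.preimage_mem_nhds ((isOpenMap_qm V hVo).mem_nhds ⟨x, hxV, hpx⟩)
  obtain ⟨ε, hε, hball⟩ := Metric.mem_nhds_iff.1 hO
  set m : ℝ := max (S - ε) α with hm
  have hmS : m < S := max_lt (by linarith) hαS
  have hIooO : Ioo m S ⊆ cbar ⁻¹' (qm G '' V) := by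
    intro t ht
    apply hball
    rw [Real.ball_eq_Ioo]
    exact ⟨lt_of_le_of_lt (le_max_left _ _) ht.1, ht.2.trans (by linarith)⟩
  have hIoosub : Ioo m S ⊆ Ico α S := fun t ht => ⟨(le_max_right _ _).trans ht.1.le, ht.2⟩
  have hmem : ∀ t ∈ Ioo m S, ∃ g : G, f t ∈ g • V := by
    intro t ht
    have h1 : qm G (f t) ∈ qm G '' V := by rw [hf.2 t (hIoosub ht)]; exact hIooO ht
    have h2 : f t ∈ qm G ⁻¹' (qm G '' V) := h1
    rw [preimage_image_qm] at h2
    exact mem_iUnion.1 h2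
  set t₀ : ℝ := (m + S) / 2 with ht₀def
  have ht₀ : t₀ ∈ Ioo m S := ⟨by rw [ht₀def]; linarith, by rw [ht₀def]; linarith⟩
  obtain ⟨g₀, hg₀⟩ := hmem t₀ ht₀
  -- the tail of the lift is in `g₀ • V`
  have hfc : ContinuousOn f (Ioo m S) := hf.1.mono hIoosub
  have htail : ∀ t ∈ Ioo m S, f t ∈ g₀ • V := by
    set U' : Set X := ⋃ g : {g : G // g • V ∩ g₀ • V = ∅}, (g : G) • V with hU'def
    have hU'o : IsOpen U' := isOpen_iUnion fun g => hVo.smul _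
    have hdisjU' : g₀ • V ∩ U' = ∅ := by
      rw [eq_empty_iff_forall_notMem]
      rintro y ⟨hy1, hy2⟩
      obtain ⟨g, hy2⟩ := mem_iUnion.1 hy2
      have : y ∈ (g : G) • V ∩ g₀ • V := ⟨hy2, hy1⟩
      rw [g.2] at this
      exact this
    have hcover : Ioo m S ⊆ (Ioo m S ∩ f ⁻¹' (g₀ • V)) ∪ (Ioo m S ∩ f ⁻¹' U') := by
      intro t ht
      obtain ⟨g, hg⟩ := hmem t ht
      rcases eq_empty_or_nonempty (g • V ∩ g₀ • V) with hemp | hne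
      · exact Or.inr ⟨ht, mem_iUnion.2 ⟨⟨g, hemp⟩, hg⟩⟩
      · left
        refine ⟨ht, ?_⟩
        have := smul_eq_of_inter_nonempty hVinv hVdisj hne
        rw [← this]
        exact hg
    have hA : IsOpen (Ioo m S ∩ f ⁻¹' (g₀ • V)) :=
      hfc.isOpen_inter_preimage isOpen_Ioo (hVo.smul _)
    have hA' : IsOpen (Ioo m S ∩ f ⁻¹' U') := hfc.isOpen_inter_preimage isOpen_Ioo hU'o
    have hsub := isPreconnected_Ioo.subset_left_of_subset_union hA hA'
      (by
        rw [Set.disjoint_iff_inter_eq_empty, eq_empty_iff_forall_notMem]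
        rintro t ⟨⟨-, h1⟩, ⟨-, h2⟩⟩
        have : f t ∈ g₀ • V ∩ U' := ⟨h1, h2⟩
        rw [hdisjU'] at this
        exact this)
      hcover ⟨t₀, ht₀, ht₀, hg₀⟩
    exact fun t ht => (hsub ht).2
  set y : X := g₀ • x with hydef
  set f' : ℝ → X := fun t => if t = S then y else f t with hf'def
  have heqon : EqOn f f' (Ico α S) := by
    intro t ht
    simp only [hf'def]
    rw [if_neg (ne_of_lt ht.2)]
  have hlift : ∀ t ∈ Icc α S, qm G (f' t) = cbar t := by
    intro t ht
    rcases eq_or_lt_of_le ht.2 with rfl | hlt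
    · simp only [hf'def, if_pos rfl, hydef]
      rw [qm_smul]
      exact hpx
    · rw [← heqon ⟨ht.1, hlt⟩]
      exact hf.2 t ⟨ht.1, hlt⟩
  refine ⟨f', ⟨?_, hlift⟩, heqon⟩
  -- continuity
  intro t ht
  rcases eq_or_lt_of_le ht.2 with heqS | hlt
  · -- continuity at the endpoint
    subst heqS
    have hf'S : f' t = y := if_pos rfl
    rw [ContinuousWithinAt, hf'S]
    rw [tendsto_nhds]
    intro U hUo hyU
    have hxU₀ : x ∈ V ∩ g₀⁻¹ • U :=
      ⟨hxV, by rw [mem_smul_set_iff_inv_smul_mem, inv_inv]; exact hyU⟩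
    obtain ⟨V', hV'o, hxV', hV'sub, hV'inv, hV'disj⟩ :=
      exists_invariant_nhd hdisc (hfin x) (hVo.inter (hUo.smul g₀⁻¹)) hxU₀
    have hV'subV : V' ⊆ V := fun z hz => (hV'sub hz).1
    have hO' : IsOpen (cbar ⁻¹' (qm G '' V')) := (isOpenMap_qm V' hV'o).preimage hc
    have hSO' : t ∈ cbar ⁻¹' (qm G '' V') := by
      show cbar t ∈ qm G '' V'
      rw [← hpx]
      exact mem_image_of_mem _ hxV'
    rw [mem_nhdsWithin]
    refine ⟨cbar ⁻¹' (qm G '' V') ∩ Ioi m, hO'.inter isOpen_Ioi, ⟨hSO', hmS⟩, ?_⟩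
    rintro s ⟨⟨hs1, hs2⟩, hs3⟩
    rcases eq_or_lt_of_le hs3.2 with heq | hsS
    · show f' s ∈ U
      simp only [hf'def]
      rw [if_pos heq]
      exact hyU
    · have hsIoo : s ∈ Ioo m t := ⟨hs2, hsS⟩
      have hg₀V : f s ∈ g₀ • V := htail s hsIoo
      have hfm : f s ∈ qm G ⁻¹' (qm G '' V') := by
        show qm G (f s) ∈ qm G '' V'
        rw [hf.2 s (hIoosub hsIoo)]
        exact hs1
      rw [preimage_image_qm] at hfm
      obtain ⟨g, hg⟩ := mem_iUnion.1 hfm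
      have hne : (g • V ∩ g₀ • V).Nonempty := ⟨f s, smul_set_mono hV'subV hg, hg₀V⟩
      have hstab := inter_nonempty_mem_stab hVdisj hne
      have hV'eq : g₀ • V' = g • V' := by
        calc g₀ • V' = (g * (g⁻¹ * g₀)) • V' := by rw [mul_inv_cancel_left]
        _ = g • ((g⁻¹ * g₀) • V') := by rw [mul_smul]
        _ = g • V' := by rw [hV'inv _ hstab]
      have hmem1 : f s ∈ g₀ • V' := hV'eq ▸ hg
      have hmem2 : f s ∈ U := by
        have h2 : f s ∈ g₀ • (g₀⁻¹ • U) :=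
          smul_set_mono (fun z hz => (hV'sub hz).2) hmem1
        rwa [smul_inv_smul] at h2
      show f' s ∈ U
      simp only [hf'def]
      rw [if_neg (ne_of_lt hsS)]
      exact hmem2
  · -- interior continuity
    have h1 : ContinuousWithinAt f (Ico α S) t := hf.1 t ⟨ht.1, hlt⟩
    have h2 : ContinuousWithinAt f' (Ico α S) t :=
      h1.congr (fun s hs => (heqon hs).symm) ((heqon ⟨ht.1, hlt⟩).symm)
    have h3 : Icc α S ∩ Iio S = Ico α S := by
      ext s; simp only [mem_inter_iff, mem_Icc, mem_Ico, mem_Iio]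
      exact ⟨fun ⟨⟨a, _⟩, b⟩ => ⟨a, b⟩, fun ⟨a, b⟩ => ⟨⟨a, b.le⟩, b⟩⟩
    rw [← h3] at h2
    exact (continuousWithinAt_inter (isOpen_Iio.mem_nhds hlt)).1 h2
/-- Zorn argument: lifts extend to the whole interval given a local extension property. -/
theorem zornLift (hfin : ∀ x : X, (stabilizer G x : Set G).Finite) (hdisc : Disc G X)
    {cbar : ℝ → Quotient (orbitRel G X)} (hc : Continuous cbar) {α β : ℝ} (hαβ : α ≤ β)
    {x₀ : X} (h₀ : qm G x₀ = cbar α)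
    (hext : ∀ T ∈ Ico α β, ∀ f : ℝ → X, IsLiftOn G cbar f (Icc α T) → f α = x₀ →
      ∃ T' ∈ Ioc T β, ∃ f' : ℝ → X, IsLiftOn G cbar f' (Icc α T') ∧ EqOn f f' (Icc α T)) :
    ∃ f : ℝ → X, IsLiftOn G cbar f (Icc α β) ∧ f α = x₀ := by
  classical
  let S := {q : ℝ × (ℝ → X) // q.1 ∈ Icc α β ∧ IsLiftOn G cbar q.2 (Icc α q.1) ∧ q.2 α = x₀}
  letI : Preorder S :=
    { le := fun q q' => q.1.1 ≤ q'.1.1 ∧ EqOn q.1.2 q'.1.2 (Icc α q.1.1)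
      le_refl := fun q => ⟨le_rfl, fun t _ => rfl⟩
      le_trans := by
        rintro q q' q'' ⟨h1, h2⟩ ⟨h3, h4⟩
        exact ⟨h1.trans h3, fun t ht => (h2 ht).trans (h4 ⟨ht.1, ht.2.trans h1⟩)⟩ }
  have htriv : IsLiftOn G cbar (fun _ => x₀) (Icc α α) ∧ (fun _ : ℝ => x₀) α = x₀ := by
    refine ⟨⟨continuousOn_const, ?_⟩, rfl⟩
    intro t ht
    have : t = α := le_antisymm ht.2 ht.1
    rw [this]
    exact h₀
  have hSne : S := ⟨(α, fun _ => x₀), ⟨le_rfl, hαβ⟩, htriv.1, htriv.2⟩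
  have hzorn : ∃ mq : S, IsMax mq := by
    apply zorn_le
    intro c hchain
    rcases c.eq_empty_or_nonempty with rfl | hcne
    · exact ⟨hSne, fun q hq => absurd hq (notMem_empty q)⟩
    obtain ⟨q1, hq1⟩ := hcne
    -- the set of right endpoints
    set E : Set ℝ := (fun q : S => q.1.1) '' c with hE
    have hEne : E.Nonempty := ⟨q1.1.1, q1, hq1, rfl⟩
    have hEbdd : BddAbove E := by
      refine ⟨β, ?_⟩
      rintro e ⟨q, hq, rfl⟩
      exact q.2.1.2
    set T : ℝ := sSup E with hT
    have hTβ : T ≤ β := csSup_le hEne (by rintro e ⟨q, hq, rfl⟩; exact q.2.1.2)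
    by_cases hattain : ∃ q ∈ c, q.1.1 = T
    · obtain ⟨qh, hqh, hqhT⟩ := hattain
      refine ⟨qh, ?_⟩
      intro q hq
      rcases hchain.total hq hqh with h | h
      · exact h
      · have hle : q.1.1 ≤ qh.1.1 := by
          rw [hqhT]
          exact le_csSup hEbdd ⟨q, hq, rfl⟩
        exact ⟨hle, fun t ht => (h.2 ⟨ht.1, ht.2.trans hle⟩).symm⟩
    · -- T is not attained
      push_neg at hattain
      have hlt : ∀ q ∈ c, q.1.1 < T := fun q hq =>
        lt_of_le_of_ne (le_csSup hEbdd ⟨q, hq, rfl⟩) (hattain q hq)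
      have hαT : α < T := lt_of_le_of_lt q1.2.1.1 (hlt q1 hq1)
      set g : ℝ → X := fun t =>
        if h : ∃ q : S, q ∈ c ∧ t ≤ q.1.1 then (Classical.choose h).1.2 t else x₀ with hgdef
      have hwd : ∀ q ∈ c, ∀ t ∈ Icc α q.1.1, g t = q.1.2 t := by
        intro q hq t ht
        have hex : ∃ q' : S, q' ∈ c ∧ t ≤ q'.1.1 := ⟨q, hq, ht.2⟩
        simp only [hgdef, dif_pos hex]
        obtain ⟨hq'c, hq't⟩ := Classical.choose_spec hex
        rcases hchain.total hq'c hq with h | h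
        · exact h.2 ⟨ht.1, hq't⟩
        · exact (h.2 ⟨ht.1, ht.2⟩).symm
      have hglift : ∀ t ∈ Ico α T, qm G (g t) = cbar t := by
        intro t ht
        obtain ⟨e, ⟨q, hq, rfl⟩, hte⟩ := exists_lt_of_lt_csSup hEne ht.2
        rw [hwd q hq t ⟨ht.1, hte.le⟩]
        exact q.2.2.1.2 t ⟨ht.1, hte.le⟩
      have hgcont : ContinuousOn g (Ico α T) := by
        intro t ht
        obtain ⟨e, ⟨q, hq, rfl⟩, hte⟩ := exists_lt_of_lt_csSup hEne ht.2
        have h1 : ContinuousWithinAt q.1.2 (Icc α q.1.1) t := q.2.2.1.1 t ⟨ht.1, hte.le⟩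
        have h2 : ContinuousWithinAt g (Icc α q.1.1) t :=
          h1.congr (fun s hs => hwd q hq s hs) (hwd q hq t ⟨ht.1, hte.le⟩)
        have h3 : ContinuousWithinAt g (Ico α T ∩ Iio q.1.1) t :=
          h2.mono fun s hs => ⟨hs.1.1, hs.2.le⟩
        exact (continuousWithinAt_inter (isOpen_Iio.mem_nhds hte)).1 h3
      obtain ⟨g', hg'lift, hg'eq⟩ := extend_closure hfin hdisc hc hαT ⟨hgcont, hglift⟩
      have hg'α : g' α = x₀ := by
        rw [← hg'eq ⟨le_rfl, hαT⟩]
        have := hwd q1 hq1 α ⟨le_rfl, q1.2.1.1⟩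
        rw [this]
        exact q1.2.2.2
      refine ⟨⟨(T, g'), ⟨hαT.le, hTβ⟩, hg'lift, hg'α⟩, ?_⟩
      intro q hq
      refine ⟨(hlt q hq).le, ?_⟩
      intro t ht
      show (q : ℝ × (ℝ → X)).2 t = g' t
      rw [← hg'eq ⟨ht.1, lt_of_le_of_lt ht.2 (hlt q hq)⟩]
      exact (hwd q hq t ht).symm
  obtain ⟨mq, hmq⟩ := hzorn
  rcases eq_or_lt_of_le mq.2.1.2 with heq | hltβ
  · refine ⟨mq.1.2, ?_, mq.2.2.2⟩
    have h := mq.2.2.1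
    rw [heq] at h
    exact h
  · exfalso
    obtain ⟨T', hT', f', hf', heqf⟩ :=
      hext mq.1.1 ⟨mq.2.1.1, hltβ⟩ mq.1.2 mq.2.2.1 mq.2.2.2
    have hf'α : f' α = x₀ := by
      rw [← heqf ⟨le_rfl, mq.2.1.1⟩]
      exact mq.2.2.2
    have hle : mq ≤ ⟨(T', f'), ⟨mq.2.1.1.trans hT'.1.le, hT'.2⟩, hf', hf'α⟩ :=
      ⟨hT'.1.le, heqf⟩
    have := hmq hle
    exact absurd (this.1.trans_lt hT'.1) (lt_irrefl _)
instance (H : Subgroup G) : ContinuousConstSMul ↥H X :=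
  ⟨fun h => continuous_const_smul (h : G)⟩

example (H : Subgroup G) (h : ↥H) (v : X) : h • v = (h : G) • v := rfl

/-- Local extension of a lift past `T`, given path lifting for the stabilizer of `f T`. -/
theorem extend_step (hfin : ∀ x : X, (stabilizer G x : Set G).Finite) (hdisc : Disc G X)
    {cbar : ℝ → Quotient (orbitRel G X)} (hc : Continuous cbar) {α T β : ℝ}
    (hT : T ∈ Ico α β) (hαT : α ≤ T) {f : ℝ → X} (hf : IsLiftOn G cbar f (Icc α T))
    (hPL : HasPLP ↥(stabilizer G (f T)) X) :
    ∃ T' ∈ Ioc T β, ∃ f' : ℝ → X, IsLiftOn G cbar f' (Icc α T') ∧ EqOn f f' (Icc α T) := by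
  classical
  set x : X := f T with hxdef
  set H : Subgroup G := stabilizer G x with hHdef
  have hpx : qm G x = cbar T := hf.2 T ⟨hαT, le_rfl⟩
  obtain ⟨V, hVo, hxV, -, hVinv, hVdisj⟩ :=
    exists_invariant_nhd hdisc (hfin x) isOpen_univ (mem_univ x)
  -- key: on V, the G-quotient and H-quotient agree
  have hkey : ∀ v ∈ V, ∀ w ∈ V, qm G v = qm G w → qm ↥H v = qm ↥H w := by
    intro v hv w hw hvw
    obtain ⟨g, rfl⟩ := qm_eq_iff.1 hvw
    have hgH : g ∈ H := by
      by_contra hg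
      have : g • w ∈ V ∩ g • V := ⟨hv, smul_mem_smul_set hw⟩
      rw [hVdisj g hg] at this
      exact this
    exact qm_eq_iff.2 ⟨⟨g, hgH⟩, rfl⟩
  -- choose T'
  have hO : IsOpen (cbar ⁻¹' (qm G '' V)) := (isOpenMap_qm V hVo).preimage hc
  have hTO : T ∈ cbar ⁻¹' (qm G '' V) := by
    show cbar T ∈ qm G '' V
    rw [← hpx]
    exact mem_image_of_mem _ hxV
  obtain ⟨ε, hε, hball⟩ := Metric.mem_nhds_iff.1 (hO.mem_nhds hTO)
  set T' : ℝ := min β (T + ε / 2) with hT'def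
  have hTT' : T < T' := lt_min hT.2 (by linarith)
  have hT'mem : T' ∈ Ioc T β := ⟨hTT', min_le_left _ _⟩
  have hJO : Icc T T' ⊆ cbar ⁻¹' (qm G '' V) := by
    intro t ht
    apply hball
    rw [Real.ball_eq_Ioo]
    have h1 : T' ≤ T + ε / 2 := min_le_right _ _
    constructor
    · linarith [ht.1]
    · linarith [ht.2]
  -- the map from the H-quotient to the G-quotient
  have hresp : ∀ a b : X, orbitRel ↥H X a b → qm G a = qm G b := by
    intro a b hab
    obtain ⟨h, rfl⟩ := mem_orbit_iff.1 (orbitRel_apply.1 hab)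
    exact qm_smul (h : G) b
  set π : Quotient (orbitRel ↥H X) → Quotient (orbitRel G X) :=
    Quotient.lift (qm G) hresp with hπdef
  have hπq : ∀ v : X, π (qm ↥H v) = qm G v := fun v => rfl
  have hπcont : Continuous π := Continuous.quotient_lift continuous_qm hresp
  -- the selected local lift of cbar into V
  set vsel : ℝ → X := fun t =>
    if h : ∃ v ∈ V, qm G v = cbar t then Classical.choose h else x with hvseldef
  have hvsel : ∀ t, cbar t ∈ qm G '' V → vsel t ∈ V ∧ qm G (vsel t) = cbar t := by
    intro t ht
    obtain ⟨v, hv, hqv⟩ := ht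
    have hex : ∃ v ∈ V, qm G v = cbar t := ⟨v, hv, hqv⟩
    simp only [hvseldef, dif_pos hex]
    exact ⟨(Classical.choose_spec hex).1, (Classical.choose_spec hex).2⟩
  -- the path in the H-quotient
  set O : Set ℝ := cbar ⁻¹' (qm G '' V) with hOdef
  have hqvcont : ContinuousOn (fun t => qm ↥H (vsel t)) O := by
    rw [continuousOn_open_iff hO]
    intro W hW
    have hset : O ∩ (fun t => qm ↥H (vsel t)) ⁻¹' W =
        O ∩ cbar ⁻¹' (qm G '' (qm ↥H ⁻¹' W ∩ V)) := by
      ext t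
      simp only [mem_inter_iff, mem_preimage, and_congr_right_iff]
      intro htO
      obtain ⟨hv1, hv2⟩ := hvsel t htO
      constructor
      · intro hW'
        exact ⟨vsel t, ⟨hW', hv1⟩, hv2⟩
      · rintro ⟨w, ⟨hwW, hwV⟩, hqw⟩
        have := hkey (vsel t) hv1 w hwV (by rw [hv2, hqw])
        rw [this]
        exact hwW
    rw [hset]
    exact hO.inter ((isOpenMap_qm _ ((continuous_qm.isOpen_preimage W hW).inter hVo)).preimage hc)
  set clamp : ℝ → ℝ := fun t => max T (min t T') with hclampdef
  have hclampcont : Continuous clamp := continuous_const.max (continuous_id.min continuous_const)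
  have hclampmem : ∀ t, clamp t ∈ Icc T T' :=
    fun t => ⟨le_max_left _ _, max_le hTT'.le (min_le_right _ _)⟩
  have hclampid : ∀ t ∈ Icc T T', clamp t = t := by
    intro t ht
    simp only [hclampdef]
    rw [min_eq_left ht.2, max_eq_right ht.1]
  set cH : ℝ → Quotient (orbitRel ↥H X) := fun t => qm ↥H (vsel (clamp t)) with hcHdef
  have hcHcont : Continuous cH :=
    hqvcont.comp_continuous hclampcont fun t => hJO (hclampmem t)
  have hxT : qm ↥H x = cH T := by
    have hTmem : clamp T = T := hclampid T ⟨le_rfl, hTT'.le⟩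
    simp only [hcHdef, hTmem]
    obtain ⟨hv1, hv2⟩ := hvsel T hTO
    exact (hkey (vsel T) hv1 x hxV (by rw [hv2, hpx])).symm
  obtain ⟨d, ⟨hdcont, hdlift⟩, hdT⟩ := hPL cH hcHcont T T' x hxT
  -- the lifted path projects correctly
  have hdproj : ∀ t ∈ Icc T T', qm G (d t) = cbar t := by
    intro t ht
    have h1 : qm ↥H (d t) = cH t := hdlift t ht
    have h2 : qm G (d t) = π (cH t) := by rw [← h1]; rfl
    rw [h2]
    simp only [hcHdef, hclampid t ht]
    rw [hπq]
    exact (hvsel t (hJO ht)).2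
  -- glue
  refine ⟨T', hT'mem, fun t => if t ≤ T then f t else d t, ⟨?_, ?_⟩, ?_⟩
  · exact glue_Icc hαT hTT'.le hf.1 hdcont (by rw [hdT])
  · intro t ht
    show qm G (if t ≤ T then f t else d t) = cbar t
    by_cases hle : t ≤ T
    · rw [if_pos hle]
      exact hf.2 t ⟨ht.1, hle⟩
    · rw [if_neg hle]
      exact hdproj t ⟨(not_le.1 hle).le, ht.2⟩
  · intro t ht
    show f t = if t ≤ T then f t else d t
    rw [if_pos ht.2]
theorem disc_subgroup (hdisc : Disc G X) (H : Subgroup G) : Disc ↥H X := by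
  intro x
  obtain ⟨V, hVn, hV⟩ := hdisc x
  refine ⟨V, hVn, ?_⟩
  intro h hh
  have hG : (h : G) ∉ stabilizer G x := by
    intro hmem
    exact hh (by rwa [mem_stabilizer_iff] at hmem ⊢)
  have := hV (h : G) hG
  rwa [show (h : G) • V = h • V from rfl] at this

/-- Forward lifting over an interval whose half-open part avoids images of fixed points. -/
theorem liftOn_Icc_of_no_fix [Finite G] (hdisc : Disc G X)
    (hsub : ∀ y : X, y ∉ fixedPoints G X → HasPLP ↥(stabilizer G y) X)
    {cbar : ℝ → Quotient (orbitRel G X)} (hc : Continuous cbar) {α β : ℝ} (hαβ : α ≤ β)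
    {x₀ : X} (h₀ : qm G x₀ = cbar α)
    (hB : ∀ t ∈ Ico α β, cbar t ∉ qm G '' fixedPoints G X) :
    ∃ f, IsLiftOn G cbar f (Icc α β) ∧ f α = x₀ := by
  have hfin : ∀ x : X, (stabilizer G x : Set G).Finite := fun _ => Set.toFinite _
  apply zornLift hfin hdisc hc hαβ h₀
  intro T hT f hf _
  refine extend_step hfin hdisc hc hT hT.1 hf (hsub _ ?_)
  intro hfix
  exact hB T hT (by rw [← hf.2 T ⟨hT.1, le_rfl⟩]; exact mem_image_of_mem _ hfix)

/-- Lifting over an interval whose open interior avoids images of fixed points. -/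
theorem liftOn_Icc_of_no_fix_interior [Finite G] (hdisc : Disc G X)
    (hsub : ∀ y : X, y ∉ fixedPoints G X → HasPLP ↥(stabilizer G y) X)
    {cbar : ℝ → Quotient (orbitRel G X)} (hc : Continuous cbar) {α β : ℝ} (hαβ : α ≤ β)
    {x₀ : X} (h₀ : qm G x₀ = cbar α)
    (hB : ∀ t ∈ Ioo α β, cbar t ∉ qm G '' fixedPoints G X) :
    ∃ f, IsLiftOn G cbar f (Icc α β) ∧ f α = x₀ := by
  rcases eq_or_lt_of_le hαβ with rfl | hlt
  · refine ⟨fun _ => x₀, ⟨continuousOn_const, ?_⟩, rfl⟩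
    intro t ht
    rw [le_antisymm ht.2 ht.1]
    exact h₀
  set γ : ℝ := (α + β) / 2 with hγdef
  have hγ : γ ∈ Ioo α β := ⟨by rw [hγdef]; linarith, by rw [hγdef]; linarith⟩
  -- backward lift on [α, γ]
  set rv : ℝ → ℝ := fun t => α + γ - t with hrvdef
  have hrvc : Continuous rv := continuous_const.sub continuous_id
  set cbar' : ℝ → Quotient (orbitRel G X) := fun t => cbar (rv t) with hcbar'def
  have hc' : Continuous cbar' := hc.comp hrvc
  obtain ⟨x₁, hx₁⟩ := qm_surjective (cbar γ)
  have h₀' : qm G x₁ = cbar' α := by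
    show qm G x₁ = cbar (α + γ - α)
    rw [show α + γ - α = γ by ring]
    exact hx₁
  obtain ⟨e, he, heα⟩ := liftOn_Icc_of_no_fix hdisc hsub hc' hγ.1.le h₀' (by
    intro t ht hmem
    have hrt : rv t ∈ Ioo α β := by
      constructor
      · show α < α + γ - t
        have := ht.2
        linarith
      · show α + γ - t < β
        have := ht.1
        have := hγ.2
        linarith
    exact hB (rv t) hrt hmem)
  set e' : ℝ → X := fun t => e (rv t) with he'def
  have hrvmaps : ∀ t ∈ Icc α γ, rv t ∈ Icc α γ := by
    intro t ht
    constructor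
    · show α ≤ α + γ - t
      have := ht.2; linarith
    · show α + γ - t ≤ γ
      have := ht.1; linarith
  have he' : IsLiftOn G cbar e' (Icc α γ) := by
    constructor
    · exact he.1.comp hrvc.continuousOn hrvmaps
    · intro t ht
      show qm G (e (rv t)) = cbar t
      rw [he.2 (rv t) (hrvmaps t ht)]
      show cbar (α + γ - (α + γ - t)) = cbar t
      rw [show α + γ - (α + γ - t) = t by ring]
  have he'α : qm G (e' α) = cbar α := he'.2 α ⟨le_rfl, hγ.1.le⟩
  obtain ⟨g, hg⟩ := qm_eq_iff.1 (h₀.trans he'α.symm)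
  set e'' : ℝ → X := fun t => g • e' t with he''def
  have he'' : IsLiftOn G cbar e'' (Icc α γ) := by
    constructor
    · exact he'.1.const_smul g
    · intro t ht
      show qm G (g • e' t) = cbar t
      rw [qm_smul]
      exact he'.2 t ht
  have he''α : e'' α = x₀ := hg
  -- forward lift on [γ, β]
  obtain ⟨d, hd, hdγ⟩ := liftOn_Icc_of_no_fix hdisc hsub hc hγ.2.le
    (he''.2 γ ⟨hγ.1.le, le_rfl⟩) (by
      intro t ht hmem
      rcases eq_or_lt_of_le ht.1 with heq | hlt2
      · exact hB t (heq ▸ hγ) hmem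
      · exact hB t ⟨hγ.1.trans hlt2, ht.2⟩ hmem)
  refine ⟨fun t => if t ≤ γ then e'' t else d t, ⟨?_, ?_⟩, ?_⟩
  · exact glue_Icc hγ.1.le hγ.2.le he''.1 hd.1 (by rw [hdγ])
  · intro t ht
    show qm G (if t ≤ γ then e'' t else d t) = cbar t
    by_cases hle : t ≤ γ
    · rw [if_pos hle]
      exact he''.2 t ⟨ht.1, hle⟩
    · rw [if_neg hle]
      exact hd.2 t ⟨(not_le.1 hle).le, ht.2⟩
  · show (if α ≤ γ then e'' α else d α) = x₀
    rw [if_pos hγ.1.le]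
    exact he''α
theorem isQuotientMap_qm : Topology.IsQuotientMap (qm G (X := X)) := by
  letI := orbitRel G X
  exact isQuotientMap_quotient_mk'

theorem isClosed_qm_image_fixedPoints [Finite G] [T2Space X] :
    IsClosed (qm G '' fixedPoints G X) := by
  have h1 : IsClosed (fixedPoints G X) := by
    have heq : fixedPoints G X = ⋂ g : G, {x : X | g • x = x} := by
      ext x
      simp only [mem_iInter, mem_setOf_eq]
      rfl
    rw [heq]
    exact isClosed_iInter fun g => isClosed_eq (continuous_const_smul g) continuous_id
  have h2 : qm G ⁻¹' (qm G '' fixedPoints G X) = fixedPoints G X := by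
    rw [preimage_image_qm]
    apply subset_antisymm
    · intro y hy
      obtain ⟨g, hyW⟩ := mem_iUnion.1 hy
      obtain ⟨z, hz, rfl⟩ := hyW
      show g • z ∈ fixedPoints G X
      rw [show g • z = z from hz g]
      exact hz
    · intro y hy
      exact mem_iUnion.2 ⟨1, ⟨y, hy, one_smul G y⟩⟩
  rw [← isQuotientMap_qm.isClosed_preimage, h2]
  exact h1

/-- Points over the image of a fixed point are unique. -/
theorem fiber_unique {z : Quotient (orbitRel G X)} (hz : z ∈ qm G '' fixedPoints G X)
    {y y' : X} (hy : qm G y = z) (hy' : qm G y' = z) : y = y' := by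
  obtain ⟨w, hw, rfl⟩ := hz
  obtain ⟨g, rfl⟩ := qm_eq_iff.1 hy
  obtain ⟨g', rfl⟩ := qm_eq_iff.1 hy'
  rw [hw g, hw g']

/-- Any point over the image of a small neighbourhood of a fixed point is near it. -/
theorem fiber_control [Finite G] {x : X} (hx : x ∈ fixedPoints G X)
    {U : Set X} (hU : IsOpen U) (hxU : x ∈ U) :
    ∃ W : Set X, IsOpen W ∧ x ∈ W ∧ ∀ y : X, qm G y ∈ qm G '' W → y ∈ U := by
  refine ⟨⋂ g : G, g • U, isOpen_iInter_of_finite fun g => hU.smul g,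
    mem_iInter.2 fun g => ⟨x, hxU, hx g⟩, ?_⟩
  intro y hy
  have h1 : y ∈ qm G ⁻¹' (qm G '' ⋂ g : G, g • U) := hy
  rw [preimage_image_qm] at h1
  obtain ⟨g, hyW⟩ := mem_iUnion.1 h1
  obtain ⟨z, hz, rfl⟩ := hyW
  have hzU : z ∈ g⁻¹ • U := mem_iInter.1 hz g⁻¹
  have h2 : g • z ∈ g • (g⁻¹ • U) := smul_mem_smul_set hzU
  rwa [smul_inv_smul] at h2
/-- Path lifting for a finite group action, assuming path lifting for all stabilizers of
non-fixed points. -/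
theorem hasPLP_of_stabilizers [Finite G] [T2Space X] (hdisc : Disc G X)
    (hsub : ∀ y : X, y ∉ fixedPoints G X → HasPLP ↥(stabilizer G y) X) : HasPLP G X := by
  intro cbar hc a b x₀ h₀
  classical
  rcases lt_or_ge b a with hba | hab
  · refine ⟨fun _ => x₀, ⟨?_, ?_⟩, rfl⟩
    · rw [Icc_eq_empty (not_le.2 hba)]
      exact continuousOn_empty _
    · intro t ht
      exact absurd (ht.1.trans ht.2) (not_le.2 hba)
  rcases eq_or_lt_of_le hab with heq | hab
  · refine ⟨fun _ => x₀, ⟨continuousOn_const, ?_⟩, rfl⟩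
    intro t ht
    have : t = a := le_antisymm (heq ▸ ht.2) ht.1
    rw [this]
    exact h₀
  set B : Set ℝ := cbar ⁻¹' (qm G '' fixedPoints G X) with hBdef
  have hBc : IsClosed B := isClosed_qm_image_fixedPoints.preimage hc
  set αf : ℝ → ℝ := fun t => sSup (insert a (B ∩ Icc a t)) with hαfdef
  set βf : ℝ → ℝ := fun t => sInf (insert b (B ∩ Icc t b)) with hβfdef
  have hbddA : ∀ t : ℝ, BddAbove (insert a (B ∩ Icc a t)) := by
    intro t
    refine ⟨max a t, ?_⟩
    rintro s hs
    rcases mem_insert_iff.1 hs with rfl | hs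
    · exact le_max_left _ _
    · exact hs.2.2.trans (le_max_right _ _)
  have hbddB : ∀ t : ℝ, BddBelow (insert b (B ∩ Icc t b)) := by
    intro t
    refine ⟨min t b, ?_⟩
    rintro s hs
    rcases mem_insert_iff.1 hs with rfl | hs
    · exact min_le_right _ _
    · exact (min_le_left _ _).trans hs.2.1
  have hαf_mem : ∀ t : ℝ, αf t ∈ insert a (B ∩ Icc a t) := by
    intro t
    apply IsClosed.csSup_mem ?_ (insert_nonempty _ _) (hbddA t)
    rw [insert_eq]
    exact isClosed_singleton.union (hBc.inter isClosed_Icc)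
  have hβf_mem : ∀ t : ℝ, βf t ∈ insert b (B ∩ Icc t b) := by
    intro t
    apply IsClosed.csInf_mem ?_ (insert_nonempty _ _) (hbddB t)
    rw [insert_eq]
    exact isClosed_singleton.union (hBc.inter isClosed_Icc)
  have hαf_le : ∀ t ∈ Icc a b, αf t ≤ t := by
    intro t ht
    apply csSup_le (insert_nonempty _ _)
    rintro s hs
    rcases mem_insert_iff.1 hs with rfl | hs
    · exact ht.1
    · exact hs.2.2
  have hβf_ge : ∀ t ∈ Icc a b, t ≤ βf t := by
    intro t ht
    apply le_csInf (insert_nonempty _ _)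
    rintro s hs
    rcases mem_insert_iff.1 hs with rfl | hs
    · exact ht.2
    · exact hs.2.1
  have hαf_ge : ∀ t : ℝ, a ≤ αf t := fun t => le_csSup (hbddA t) (mem_insert _ _)
  have hβf_le : ∀ t : ℝ, βf t ≤ b := fun t => csInf_le (hbddB t) (mem_insert _ _)
  have hnoB : ∀ t ∈ Icc a b, ∀ s : ℝ, αf t < s → s < βf t → s ∉ B := by
    intro t ht s h1 h2 hsB
    rcases le_or_gt s t with hst | hts
    · have hs_mem : s ∈ insert a (B ∩ Icc a t) :=
        mem_insert_iff.2 (Or.inr ⟨hsB, ((hαf_ge t).trans_lt h1).le, hst⟩)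
      exact absurd (le_csSup (hbddA t) hs_mem) (not_le.2 h1)
    · have hs_mem : s ∈ insert b (B ∩ Icc t b) :=
        mem_insert_iff.2 (Or.inr ⟨hsB, hts.le, (h2.trans_le (hβf_le t)).le⟩)
      exact absurd (csInf_le (hbddB t) hs_mem) (not_le.2 h2)
  have hconst : ∀ t ∈ Icc a b, t ∉ B → ∀ t' : ℝ, αf t < t' → t' < βf t →
      αf t' = αf t ∧ βf t' = βf t := by
    intro t ht htB t' h1 h2
    rcases le_total t' t with hle | hle
    · constructor
      · have hset : B ∩ Icc a t' = B ∩ Icc a t := by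
          apply subset_antisymm
          · exact inter_subset_inter_right _ (Icc_subset_Icc le_rfl hle)
          · rintro s ⟨hsB, hsa, hst⟩
            refine ⟨hsB, hsa, ?_⟩
            by_contra hgt
            push_neg at hgt
            rcases eq_or_lt_of_le hst with heq2 | hslt
            · exact htB (heq2 ▸ hsB)
            · exact hnoB t ht s (h1.trans hgt) (hslt.trans_le (hβf_ge t ht)) hsB
        show sSup (insert a (B ∩ Icc a t')) = sSup (insert a (B ∩ Icc a t))
        rw [hset]
      · have hset : B ∩ Icc t' b = B ∩ Icc t b := by
          apply subset_antisymm
          · rintro s ⟨hsB, hst', hsb⟩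
            refine ⟨hsB, ?_, hsb⟩
            by_contra hlt2
            push_neg at hlt2
            rcases eq_or_lt_of_le hst' with heq2 | hslt
            · exact hnoB t ht t' h1 h2 (heq2 ▸ hsB)
            · exact hnoB t ht s (h1.trans hslt) (hlt2.trans_le (hβf_ge t ht)) hsB
          · exact inter_subset_inter_right _ (Icc_subset_Icc hle le_rfl)
        show sInf (insert b (B ∩ Icc t' b)) = sInf (insert b (B ∩ Icc t b))
        rw [hset]
    · constructor
      · have hset : B ∩ Icc a t' = B ∩ Icc a t := by
          apply subset_antisymm
          · rintro s ⟨hsB, hsa, hst'⟩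
            refine ⟨hsB, hsa, ?_⟩
            by_contra hgt
            push_neg at hgt
            exact hnoB t ht s ((hαf_le t ht).trans_lt hgt)
              ((lt_of_le_of_ne hst' (fun h => hnoB t ht t' h1 h2 (h ▸ hsB))).trans h2) hsB
          · exact inter_subset_inter_right _ (Icc_subset_Icc le_rfl hle)
        show sSup (insert a (B ∩ Icc a t')) = sSup (insert a (B ∩ Icc a t))
        rw [hset]
      · have hset : B ∩ Icc t' b = B ∩ Icc t b := by
          apply subset_antisymm
          · exact inter_subset_inter_right _ (Icc_subset_Icc hle le_rfl)
          · rintro s ⟨hsB, hst, hsb⟩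
            refine ⟨hsB, ?_, hsb⟩
            by_contra hlt2
            push_neg at hlt2
            rcases eq_or_lt_of_le hst with heq2 | hslt
            · exact htB (heq2 ▸ hsB)
            · exact hnoB t ht s ((hαf_le t ht).trans_lt hslt) (hlt2.trans h2) hsB
        show sInf (insert b (B ∩ Icc t' b)) = sInf (insert b (B ∩ Icc t b))
        rw [hset]
  have hout : ∀ t : ℝ, qm G ((cbar t).out) = cbar t := fun t => Quotient.out_eq _
  have houtB : ∀ t ∈ B, (cbar t).out ∈ fixedPoints G X := by
    intro t ht
    obtain ⟨w, hw, hwq⟩ := id ht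
    rw [fiber_unique ht (hout t) hwq]
    exact hw
  set st : ℝ → X := fun u => if u = a then x₀ else (cbar u).out with hstdef
  have hst : ∀ u : ℝ, qm G (st u) = cbar u := by
    intro u
    by_cases h : u = a
    · simp only [hstdef]
      rw [if_pos h, h]
      exact h₀
    · simp only [hstdef]
      rw [if_neg h]
      exact hout u
  set P : ℝ → ℝ → Prop := fun u v => u ≤ v ∧ (∀ s ∈ Ioo u v, s ∉ B) with hPdef
  have hlifts : ∀ u v : ℝ, P u v → ∃ f, IsLiftOn G cbar f (Icc u v) ∧ f u = st u := by
    rintro u v ⟨h2, h4⟩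
    apply liftOn_Icc_of_no_fix_interior hdisc hsub hc h2 (hst u)
    intro s hs hmem
    exact h4 s hs hmem
  set L : ℝ → ℝ → ℝ → X := fun u v =>
    if h : P u v then Classical.choose (hlifts u v h) else fun _ => x₀ with hLdef
  have hL : ∀ u v (h : P u v), IsLiftOn G cbar (L u v) (Icc u v) ∧ L u v u = st u := by
    intro u v h
    simp only [hLdef, dif_pos h]
    exact Classical.choose_spec (hlifts u v h)
  set F : ℝ → X := fun t => if t ∈ B then (cbar t).out else L (αf t) (βf t) t with hFdef
  have hP : ∀ t ∈ Icc a b, P (αf t) (βf t) := by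
    intro t ht
    refine ⟨(hαf_le t ht).trans (hβf_ge t ht), ?_⟩
    intro s hs
    exact hnoB t ht s hs.1 hs.2
  have hFlift : ∀ t ∈ Icc a b, qm G (F t) = cbar t := by
    intro t ht
    by_cases htB : t ∈ B
    · simp only [hFdef]
      rw [if_pos htB]
      exact hout t
    · simp only [hFdef]
      rw [if_neg htB]
      exact (hL _ _ (hP t ht)).1.2 t ⟨hαf_le t ht, hβf_ge t ht⟩
  have hαfa : a ∉ B → αf a = a := by
    intro haB
    have hset : insert a (B ∩ Icc a a) = {a} := by
      apply subset_antisymm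
      · rintro s hs
        rcases mem_insert_iff.1 hs with rfl | hs
        · exact mem_singleton _
        · have : s = a := le_antisymm hs.2.2 hs.2.1
          exact absurd (this ▸ hs.1) haB
      · intro s hs
        rw [mem_singleton_iff.1 hs]
        exact mem_insert _ _
    show sSup (insert a (B ∩ Icc a a)) = a
    rw [hset, csSup_singleton]
  have hβfb : b ∉ B → βf b = b := by
    intro hbB
    have hset : insert b (B ∩ Icc b b) = {b} := by
      apply subset_antisymm
      · rintro s hs
        rcases mem_insert_iff.1 hs with rfl | hs
        · exact mem_singleton _
        · have : s = b := le_antisymm hs.2.2 hs.2.1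
          exact absurd (this ▸ hs.1) hbB
      · intro s hs
        rw [mem_singleton_iff.1 hs]
        exact mem_insert _ _
    show sInf (insert b (B ∩ Icc b b)) = b
    rw [hset, csInf_singleton]
  have hFa : F a = x₀ := by
    by_cases haB : a ∈ B
    · simp only [hFdef]
      rw [if_pos haB]
      exact fiber_unique haB (hout a) h₀
    · simp only [hFdef]
      rw [if_neg haB]
      have h := (hL _ _ (hP a ⟨le_rfl, hab.le⟩)).2
      rw [hαfa haB] at h
      rw [hαfa haB, h]
      simp [hstdef]
  refine ⟨F, ⟨?_, hFlift⟩, hFa⟩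
  intro t ht
  by_cases htB : t ∈ B
  · -- continuity at points over fixed orbits
    have hFt : F t = (cbar t).out := by simp only [hFdef]; rw [if_pos htB]
    rw [ContinuousWithinAt, hFt, tendsto_nhds]
    intro U hUo hFU
    obtain ⟨W, hWo, hW1, hW2⟩ := fiber_control (houtB t htB) hUo hFU
    rw [mem_nhdsWithin]
    refine ⟨cbar ⁻¹' (qm G '' W), (isOpenMap_qm W hWo).preimage hc, ?_, ?_⟩
    · show cbar t ∈ qm G '' W
      rw [← hout t]
      exact mem_image_of_mem _ hW1
    · rintro s ⟨hs1, hs2⟩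
      show F s ∈ U
      apply hW2
      rw [hFlift s hs2]
      exact hs1
  · rcases eq_or_ne t a with heq | hta
    · -- left endpoint
      subst heq
      have hb1 : t < βf t := by
        refine lt_of_le_of_ne (hβf_ge t ht) fun h => ?_
        rcases mem_insert_iff.1 (hβf_mem t) with h2 | h2
        · exact absurd (h ▸ h2) hab.ne
        · exact htB (h ▸ h2.1)
      have key : ∀ s ∈ Icc t b ∩ Iio (βf t), F s = L t (βf t) s := by
        rintro s ⟨hs1, hs2⟩
        rcases eq_or_lt_of_le hs1.1 with heq2 | hgt
        · simp only [hFdef]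
          rw [if_neg (heq2 ▸ htB), ← heq2, hαfa htB]
        · have hsIoo : s ∈ Ioo (αf t) (βf t) := ⟨(hαfa htB).symm ▸ hgt, hs2⟩
          have hsB : s ∉ B := hnoB t ht s hsIoo.1 hsIoo.2
          simp only [hFdef]
          rw [if_neg hsB]
          obtain ⟨e1, e2⟩ := hconst t ht htB s hsIoo.1 hsIoo.2
          rw [e1, e2, hαfa htB]
      have hPt : P t (βf t) := by
        have := hP t ht
        rwa [hαfa htB] at this
      have hcw : ContinuousWithinAt (L t (βf t)) (Icc t (βf t)) t :=
        (hL _ _ hPt).1.1 t ⟨le_rfl, hb1.le⟩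
      have hcw2 : ContinuousWithinAt (L t (βf t)) (Icc t b ∩ Iio (βf t)) t :=
        hcw.mono fun s hs => ⟨hs.1.1, hs.2.le⟩
      have hcw3 : ContinuousWithinAt F (Icc t b ∩ Iio (βf t)) t :=
        hcw2.congr (fun s hs => key s hs) (key t ⟨⟨le_rfl, hab.le⟩, hb1⟩)
      exact (continuousWithinAt_inter (isOpen_Iio.mem_nhds hb1)).1 hcw3
    rcases eq_or_ne t b with heq | htb
    · -- right endpoint
      subst heq
      have ha1 : αf t < t := by
        refine lt_of_le_of_ne (hαf_le t ht) fun h => ?_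
        rcases mem_insert_iff.1 (hαf_mem t) with h2 | h2
        · exact hta (h ▸ h2)
        · exact htB (h ▸ h2.1)
      have key : ∀ s ∈ Icc a t ∩ Ioi (αf t), F s = L (αf t) t s := by
        rintro s ⟨hs1, hs2⟩
        rcases eq_or_lt_of_le hs1.2 with heq2 | hlt2
        · simp only [hFdef]
          rw [if_neg (heq2 ▸ htB), heq2, hβfb htB]
        · have hsIoo : s ∈ Ioo (αf t) (βf t) := ⟨hs2, (hβfb htB).symm ▸ hlt2⟩
          have hsB : s ∉ B := hnoB t ht s hsIoo.1 hsIoo.2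
          simp only [hFdef]
          rw [if_neg hsB]
          obtain ⟨e1, e2⟩ := hconst t ht htB s hsIoo.1 hsIoo.2
          rw [e1, e2, hβfb htB]
      have hPt : P (αf t) t := by
        have := hP t ht
        rwa [hβfb htB] at this
      have hcw : ContinuousWithinAt (L (αf t) t) (Icc (αf t) t) t :=
        (hL _ _ hPt).1.1 t ⟨ha1.le, le_rfl⟩
      have hcw2 : ContinuousWithinAt (L (αf t) t) (Icc a t ∩ Ioi (αf t)) t :=
        hcw.mono fun s hs => ⟨hs.2.le, hs.1.2⟩
      have hcw3 : ContinuousWithinAt F (Icc a t ∩ Ioi (αf t)) t :=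
        hcw2.congr (fun s hs => key s hs) (key t ⟨⟨hab.le, le_rfl⟩, ha1⟩)
      exact (continuousWithinAt_inter (isOpen_Ioi.mem_nhds ha1)).1 hcw3
    · -- interior point
      have ha1 : αf t < t := by
        refine lt_of_le_of_ne (hαf_le t ht) fun h => ?_
        rcases mem_insert_iff.1 (hαf_mem t) with h2 | h2
        · exact hta (h ▸ h2)
        · exact htB (h ▸ h2.1)
      have hb1 : t < βf t := by
        refine lt_of_le_of_ne (hβf_ge t ht) fun h => ?_
        rcases mem_insert_iff.1 (hβf_mem t) with h2 | h2
        · exact htb (h ▸ h2)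
        · exact htB (h ▸ h2.1)
      have key : ∀ s ∈ Icc a b ∩ Ioo (αf t) (βf t), F s = L (αf t) (βf t) s := by
        rintro s ⟨hs1, hs2⟩
        have hsB : s ∉ B := hnoB t ht s hs2.1 hs2.2
        simp only [hFdef]
        rw [if_neg hsB]
        obtain ⟨e1, e2⟩ := hconst t ht htB s hs2.1 hs2.2
        rw [e1, e2]
      have hcw : ContinuousWithinAt (L (αf t) (βf t)) (Icc (αf t) (βf t)) t :=
        (hL _ _ (hP t ht)).1.1 t ⟨hαf_le t ht, hβf_ge t ht⟩
      have hcw2 : ContinuousWithinAt (L (αf t) (βf t)) (Icc a b ∩ Ioo (αf t) (βf t)) t :=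
        hcw.mono fun s hs => ⟨hs.2.1.le, hs.2.2.le⟩
      have hcw3 : ContinuousWithinAt F (Icc a b ∩ Ioo (αf t) (βf t)) t :=
        hcw2.congr (fun s hs => key s hs) (key t ⟨ht, ha1, hb1⟩)
      exact (continuousWithinAt_inter (isOpen_Ioo.mem_nhds ⟨ha1, hb1⟩)).1 hcw3
universe u₁ u₂

theorem hasPLP_finite_aux : ∀ (n : ℕ) (G' : Type u₁) [Group G'] [Finite G'],
    Nat.card G' ≤ n →
    ∀ (X' : Type u₂) [TopologicalSpace X'] [T2Space X'] [MulAction G' X']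
      [ContinuousConstSMul G' X'], Disc G' X' → HasPLP G' X' := by
  intro n
  induction n with
  | zero =>
    intro G' _ _ hcard
    have : 0 < Nat.card G' := Nat.card_pos
    omega
  | succ n ih =>
    intro G' _ _ hcard X' _ _ _ _ hdisc
    apply hasPLP_of_stabilizers hdisc
    intro y hy
    have hex : ∃ g : G', g • y ≠ y := by
      by_contra hno
      push_neg at hno
      exact hy hno
    obtain ⟨g, hg⟩ := hex
    have hns : g ∉ stabilizer G' y := by rwa [mem_stabilizer_iff]
    have hlt : Nat.card ↥(stabilizer G' y) < Nat.card G' := Finite.card_subtype_lt hns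
    exact ih ↥(stabilizer G' y) (by omega) X' (disc_subgroup hdisc _)

theorem main_hasPLP [T2Space X] (hfin : ∀ x : X, (stabilizer G x : Set G).Finite)
    (hdisc : Disc G X) : HasPLP G X := by
  intro cbar hc a b x₀ h₀
  rcases lt_or_ge b a with hba | hab
  · refine ⟨fun _ => x₀, ⟨?_, ?_⟩, rfl⟩
    · rw [Icc_eq_empty (not_le.2 hba)]
      exact continuousOn_empty _
    · intro t ht
      exact absurd (ht.1.trans ht.2) (not_le.2 hba)
  apply zornLift hfin hdisc hc hab h₀
  intro T hT f hf _
  refine extend_step hfin hdisc hc hT hT.1 hf ?_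
  haveI : Finite ↥(stabilizer G (f T)) := (hfin (f T)).to_subtype
  exact hasPLP_finite_aux (Nat.card ↥(stabilizer G (f T))) ↥(stabilizer G (f T)) le_rfl X
    (disc_subgroup hdisc _)

end PathLiftAux

/-- If a group `G` acts discontinuously on a Hausdorff space `X`, then the quotient map
`p : X → X/G` has the path lifting property: every path `ā` in `X/G` with `ā 0 = p x₀`
lifts to a path `a` in `X` starting at `x₀` with `p ∘ a = ā`. -/
theorem discontinuous_action_path_lifting {G X : Type*} [Group G] [TopologicalSpace X]
    [T2Space X] [MulAction G X] [ContinuousConstSMul G X]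
    (hfin : ∀ x : X, (MulAction.stabilizer G x : Set G).Finite)
    (hdisc : ∀ x : X, ∃ V ∈ nhds x,
      ∀ g : G, g ∉ MulAction.stabilizer G x → V ∩ g • V = ∅)
    (abar : C(unitInterval, Quotient (MulAction.orbitRel G X))) (x₀ : X)
    (h₀ : Quotient.mk (MulAction.orbitRel G X) x₀ = abar 0) :
    ∃ a : C(unitInterval, X),
      (∀ t : unitInterval, Quotient.mk (MulAction.orbitRel G X) (a t) = abar t) ∧
      a 0 = x₀ := by
  classical
  have hdisc' : PathLiftAux.Disc G X := hdisc
  set proj : ℝ → unitInterval := fun t => Set.projIcc 0 1 zero_le_one t with hprojdef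
  have hprojc : Continuous proj := continuous_projIcc
  set cbar : ℝ → Quotient (MulAction.orbitRel G X) := fun t => abar (proj t) with hcbardef
  have hc : Continuous cbar := abar.continuous.comp hprojc
  have hproj0 : proj 0 = 0 := by
    simp only [hprojdef]
    rw [Set.projIcc_left]
    rfl
  have h₀' : PathLiftAux.qm G x₀ = cbar 0 := by
    show Quotient.mk (MulAction.orbitRel G X) x₀ = abar (proj 0)
    rw [hproj0]
    exact h₀
  obtain ⟨f, hf, hfa⟩ := PathLiftAux.main_hasPLP hfin hdisc' cbar hc 0 1 x₀ h₀'
  have hmem : ∀ t : unitInterval, (t : ℝ) ∈ Set.Icc (0 : ℝ) 1 := fun t => t.2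
  refine ⟨⟨fun t => f t, hf.1.comp_continuous continuous_subtype_val hmem⟩, ?_, ?_⟩
  · intro t
    have h1 : PathLiftAux.qm G (f t) = cbar t := hf.2 t (hmem t)
    have h2 : proj (t : ℝ) = t := by
      simp only [hprojdef]
      rw [Set.projIcc_of_mem zero_le_one (hmem t)]
    show PathLiftAux.qm G (f (t : ℝ)) = abar t
    rw [h1]
    show abar (proj (t : ℝ)) = abar t
    rw [h2]
  · show f ((0 : unitInterval) : ℝ) = x₀
    rw [show ((0 : unitInterval) : ℝ) = (0 : ℝ) from rfl]
    exact hfa
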